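/- arXiv:0807.0999 — 3 statements merged into one kernel-verified Lean document; each statement's English description precedes it below -/
import Mathlib

section
/- Let k be a field and H a Hopf algebra over k with comultiplication Δ, counit ε and antipode S. Let G′ be a set of k-algebra homomorphisms H → k such that: ε ∈ G′; for all f, g ∈ G′ the convolution f ⋆ g (defined by (f ⋆ g)(x) = m_k((f ⊗ g)(Δx))) belongs to G′; and for all f ∈ G′ the composite f ∘ S belongs to G′. Define J := { x ∈ H : f(x) = 0 for all f ∈ G′ }. Then J is a Hopf ideal of H: J is a two-sided ideal, ε(J) = 0, S(J) ⊆ J, and Δ(J) ⊆ J⊗H + H⊗J, where J⊗H and H⊗J denote the images of J ⊗ H and H ⊗ J inside H ⊗ H. (This is the key step showing that the common vanishing ideal of a subgroup of the character group is a Hopf ideal, so that the quotient H/J is again a Hopf algebra.) -/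
/-!
The first three properties are immediate: characters are multiplicative, `ε ∈ G'`, and
`f ∘ S ∈ G'` for `f ∈ G'`. For the coproduct, closure under convolution gives
`(f ⊗ g)(Δx) = 0` for `x ∈ J` and `f, g ∈ G'`. Over a field, `J ⊗ H + H ⊗ J` is the kernel of
`H ⊗ H → H/J ⊗ H/J`, and the characters in `G'` descend to functionals separating the points
of `H/J`. Products `φ ⊗ ψ` of two separating families of functionals separate the points of a
tensor product (expand in a basis of the second factor), so `Δx` lies in that kernel.
-/

open scoped TensorProduct
open LinearMap

theorem Submodule.eq_zero_of_forall_liftQ_iInf_ker_eq_zero {R M P ι : Type*} [Ring R]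
    [AddCommGroup M] [Module R M] [AddCommGroup P] [Module R P] (φ : ι → M →ₗ[R] P)
    (v : M ⧸ ⨅ i, ker (φ i)) (hv : ∀ i, (⨅ i, ker (φ i)).liftQ (φ i) (iInf_le _ i) v = 0) :
    v = 0 := by
  obtain ⟨y, rfl⟩ := Submodule.mkQ_surjective _ v
  simpa [Submodule.mem_iInf] using hv

namespace TensorProduct

section CommRing

variable {R V W P : Type*} [CommRing R] [AddCommGroup V] [Module R V] [AddCommGroup W]
  [Module R W] [AddCommGroup P] [Module R P]

theorem equivFinsuppOfBasisRight_rTensor_apply {κ : Type*} [DecidableEq κ]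
    (b : Module.Basis κ R W) (f : V →ₗ[R] P) (u : V ⊗[R] W) (j : κ) :
    equivFinsuppOfBasisRight b (rTensor W f u) j = f (equivFinsuppOfBasisRight b u j) := by
  induction u using TensorProduct.induction_on with
  | zero => simp
  | tmul v w => simp
  | add u u' hu hu' => simp [hu, hu']

theorem eq_zero_of_forall_rTensor_eq_zero [Module.Free R W] {ι : Type*} (φ : ι → V →ₗ[R] P)
    (hφ : ∀ v, (∀ i, φ i v = 0) → v = 0) {u : V ⊗[R] W}
    (hu : ∀ i, rTensor W (φ i) u = 0) : u = 0 := by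
  classical
  let b := Module.Free.chooseBasis R W
  suffices equivFinsuppOfBasisRight b u = 0 from
    (equivFinsuppOfBasisRight b).map_eq_zero_iff.mp this
  ext j
  refine hφ _ fun i => ?_
  rw [← equivFinsuppOfBasisRight_rTensor_apply, hu i, map_zero, Finsupp.zero_apply]

theorem eq_zero_of_forall_map_eq_zero [Module.Free R W] {ι κ : Type*} (φ : ι → V →ₗ[R] R)
    (ψ : κ → W →ₗ[R] R) (hφ : ∀ v, (∀ i, φ i v = 0) → v = 0)
    (hψ : ∀ w, (∀ j, ψ j w = 0) → w = 0) {u : V ⊗[R] W}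
    (hu : ∀ i j, map (φ i) (ψ j) u = 0) : u = 0 := by
  refine eq_zero_of_forall_rTensor_eq_zero φ hφ fun i => ?_
  have lid_lTensor (t : R ⊗[R] W) (j : κ) :
      TensorProduct.lid R R (lTensor R (ψ j) t) = ψ j (TensorProduct.lid R W t) := by
    induction t using TensorProduct.induction_on with
    | zero => simp
    | tmul r w => simp
    | add t t' ht ht' => simp only [map_add, ht, ht']
  suffices TensorProduct.lid R W (rTensor W (φ i) u) = 0 from
    (TensorProduct.lid R W).map_eq_zero_iff.mp this
  refine hψ _ fun j => ?_
  rw [← lid_lTensor, ← LinearMap.comp_apply, lTensor_comp_rTensor, hu, map_zero]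

theorem ker_map_mkQ (p : Submodule R V) (q : Submodule R W) :
    ker (map p.mkQ q.mkQ) = Submodule.map₂ (mk R V W) p ⊤ ⊔ Submodule.map₂ (mk R V W) ⊤ q := by
  rw [map_ker (exact_subtype_mkQ p) p.mkQ_surjective (exact_subtype_mkQ q) q.mkQ_surjective,
    sup_comm, lTensor, rTensor, range_map, range_map, range_id, range_id,
    Submodule.range_subtype, Submodule.range_subtype]

end CommRing

theorem mem_map₂_sup_of_forall_map_eq_zero {k V W ι κ : Type*} [Field k] [AddCommGroup V]
    [Module k V] [AddCommGroup W] [Module k W] (φ : ι → V →ₗ[k] k) (ψ : κ → W →ₗ[k] k)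
    {u : V ⊗[k] W} (hu : ∀ i j, map (φ i) (ψ j) u = 0) :
    u ∈ Submodule.map₂ (mk k V W) (⨅ i, ker (φ i)) ⊤ ⊔
      Submodule.map₂ (mk k V W) ⊤ (⨅ j, ker (ψ j)) := by
  rw [← ker_map_mkQ, mem_ker]
  refine eq_zero_of_forall_map_eq_zero _ _
    (Submodule.eq_zero_of_forall_liftQ_iInf_ker_eq_zero φ)
    (Submodule.eq_zero_of_forall_liftQ_iInf_ker_eq_zero ψ) fun i j => ?_
  rw [← LinearMap.comp_apply, ← map_comp, Submodule.liftQ_mkQ, Submodule.liftQ_mkQ, hu]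

end TensorProduct

/-- Let `H` be a Hopf algebra over a field `k` and `G'` a set of
characters `H → k` containing the counit and closed under convolution and under
composition with the antipode.  Then the common vanishing set
`J = {x | f(x) = 0 for all f ∈ G'}` is a Hopf ideal: a two-sided ideal with `ε(J) = 0`,
`S(J) ⊆ J` and `Δ(J) ⊆ J⊗H + H⊗J`. -/
theorem vanishing_ideal_is_hopf_ideal
    (k H : Type) [Field k] [Ring H] [HopfAlgebra k H]
    (G' : Set (H →ₐ[k] k))
    (hcounit : Bialgebra.counitAlgHom k H ∈ G')
    (hconv : ∀ f ∈ G', ∀ g ∈ G', ∃ h ∈ G', ∀ x : H,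
      h x = LinearMap.mul' k k
        (TensorProduct.map f.toLinearMap g.toLinearMap (Coalgebra.comul (R := k) x)))
    (hantipode : ∀ f ∈ G', ∃ h ∈ G', ∀ x : H,
      h x = f (HopfAlgebra.antipode (R := k) x))
    (J : Submodule k H)
    (hJ : ∀ x : H, x ∈ J ↔ ∀ f ∈ G', f x = 0) :
    (∀ x ∈ J, ∀ r : H, r * x ∈ J ∧ x * r ∈ J) ∧
    (∀ x ∈ J, Coalgebra.counit (R := k) x = 0) ∧
    (∀ x ∈ J, HopfAlgebra.antipode (R := k) x ∈ J) ∧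
    (∀ x ∈ J, Coalgebra.comul (R := k) x ∈
      Submodule.map₂ (TensorProduct.mk k H H) J ⊤ ⊔
        Submodule.map₂ (TensorProduct.mk k H H) (⊤ : Submodule k H) J) := by
  have hJ_iInf : J = ⨅ f : G', ker (f : H →ₐ[k] k).toLinearMap := by
    ext x
    simp [hJ, Submodule.mem_iInf]
  refine ⟨fun x hx r => ⟨?_, ?_⟩, fun x hx => ?_, fun x hx => ?_, fun x hx => ?_⟩
  · exact (hJ _).2 fun f hf => by rw [map_mul, (hJ x).1 hx f hf, mul_zero]
  · exact (hJ _).2 fun f hf => by rw [map_mul, (hJ x).1 hx f hf, zero_mul]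
  · exact (hJ x).1 hx _ hcounit
  · refine (hJ _).2 fun f hf => ?_
    obtain ⟨h, hh, h_eq⟩ := hantipode f hf
    rw [← h_eq, (hJ x).1 hx h hh]
  · rw [hJ_iInf]
    refine TensorProduct.mem_map₂_sup_of_forall_map_eq_zero _ _ fun ⟨f, hf⟩ ⟨g, hg⟩ => ?_
    obtain ⟨h, hh, h_eq⟩ := hconv f hf g hg
    -- `mul' k k` is definitionally the isomorphism `TensorProduct.lid k k`
    exact (TensorProduct.lid k k).map_eq_zero_iff.mp (h_eq x ▸ (hJ x).1 hx h hh)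
end

section
/- Let k be a field and H a bialgebra over k equipped with a grading H = ⊕_{n∈ℕ} H_n by k-submodules such that H_i·H_j ⊆ H_{i+j}, the comultiplication satisfies Δ(H_n) ⊆ ∑_{i+j=n} H_i ⊗ H_j (as submodules of H ⊗ H), and H_0 = k·1. Then H admits an antipode: there exists a k-linear map S : H → H satisfying m ∘ (S ⊗ id) ∘ Δ = η ∘ ε = m ∘ (id ⊗ S) ∘ Δ, so that H is a Hopf algebra. (This underlies the recursive formula S(Γ) = −Γ − ∑_{γ⊊Γ} S(γ) Γ/γ defining the antipode in the connected graded Hopf algebra of Feynman graphs.) -/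
/-!
In the convolution algebra of `k`-linear endomorphisms of `H`, an antipode is precisely a two-sided
inverse of `id = 1 - f`, where `f = η ∘ ε - id`. Connectedness makes `f` vanish on `H₀`, and since
`Δ` respects the grading, the convolution power `f ^ m` then vanishes on `Hₙ` for `m > n`. Hence
the geometric series `∑ f ^ m` is a finite sum on each `Hₙ`; glued along the direct sum
decomposition it is the inverse of `1 - f`.
-/

open scoped TensorProduct
open Coalgebra WithConv

theorem LinearMap.ext_of_iSup_eq_top {R M N ι : Type*} [Semiring R] [AddCommMonoid M]
    [Module R M] [AddCommMonoid N] [Module R N] {𝒜 : ι → Submodule R M} (h : iSup 𝒜 = ⊤)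
    {f g : M →ₗ[R] N} (hfg : ∀ i, ∀ x ∈ 𝒜 i, f x = g x) : f = g := by
  rw [← LinearMap.eqLocus_eq_top, eq_top_iff, ← h]
  exact iSup_le fun i x hx ↦ hfg i x hx

theorem DirectSum.IsInternal.exists_linearMap_eqOn {R M N ι : Type*} [Semiring R]
    [AddCommMonoid M] [Module R M] [AddCommMonoid N] [Module R N] [DecidableEq ι]
    {𝒜 : ι → Submodule R M} (h : IsInternal 𝒜) (g : ι → M →ₗ[R] N) :
    ∃ f : M →ₗ[R] N, ∀ i, ∀ x ∈ 𝒜 i, f x = g i x := by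
  refine ⟨toModule R ι N (fun i ↦ g i ∘ₗ (𝒜 i).subtype) ∘ₗ
    (LinearEquiv.ofBijective (coeLinearMap 𝒜) h).symm.toLinearMap, fun i x hx ↦ ?_⟩
  have : (LinearEquiv.ofBijective (coeLinearMap 𝒜) h).symm x = lof R ι (𝒜 ·) i ⟨x, hx⟩ := by
    rw [LinearEquiv.symm_apply_eq]
    exact (coeLinearMap_of 𝒜 i ⟨x, hx⟩).symm
  simp [this]

def IsGradedComul {R C : Type*} [CommSemiring R] [AddCommMonoid C] [Module R C]
    [CoalgebraStruct R C] (𝒜 : ℕ → Submodule R C) : Prop :=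
  ∀ n : ℕ, (𝒜 n).map (comul (R := R)) ≤
    ⨆ (p : ℕ × ℕ) (_ : p.1 + p.2 = n), Submodule.map₂ (TensorProduct.mk R C C) (𝒜 p.1) (𝒜 p.2)

namespace IsGradedComul

variable {R C A : Type*} [CommSemiring R] [AddCommMonoid C] [Module R C]
  {𝒜 : ℕ → Submodule R C}

theorem apply_comul_eq [CoalgebraStruct R C] {M : Type*} [AddCommMonoid M] [Module R M]
    (h𝒜 : IsGradedComul 𝒜) {n : ℕ} {x : C} (hx : x ∈ 𝒜 n) {D₁ D₂ : C ⊗[R] C →ₗ[R] M}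
    (hD : ∀ i j, i + j = n → ∀ a ∈ 𝒜 i, ∀ b ∈ 𝒜 j, D₁ (a ⊗ₜ b) = D₂ (a ⊗ₜ b)) :
    D₁ (comul x) = D₂ (comul x) :=
  (iSup₂_le (a := LinearMap.eqLocus D₁ D₂) fun p hp ↦
    Submodule.map₂_le.2 fun a ha b hb ↦ hD p.1 p.2 hp a ha b hb) (h𝒜 n ⟨x, hx, rfl⟩)

theorem convMul_apply_congr [CoalgebraStruct R C] [Semiring A] [Algebra R A]
    (h𝒜 : IsGradedComul 𝒜) {f f' g g' : WithConv (C →ₗ[R] A)} {n : ℕ}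
    (hf : ∀ i ≤ n, ∀ a ∈ 𝒜 i, f a = f' a) (hg : ∀ j ≤ n, ∀ b ∈ 𝒜 j, g b = g' b)
    {x : C} (hx : x ∈ 𝒜 n) : (f * g) x = (f' * g') x :=
  h𝒜.apply_comul_eq hx (D₁ := LinearMap.mul' R A ∘ₗ TensorProduct.map f.ofConv g.ofConv)
    (D₂ := LinearMap.mul' R A ∘ₗ TensorProduct.map f'.ofConv g'.ofConv)
    fun i j hij a ha b hb ↦ by simp [hf i (by omega) a ha, hg j (by omega) b hb]

theorem convPow_apply_eq_zero [Coalgebra R C] [Semiring A] [Algebra R A]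
    (h𝒜 : IsGradedComul 𝒜) {f : WithConv (C →ₗ[R] A)} (hf : ∀ a ∈ 𝒜 0, f a = 0)
    {m n : ℕ} (hnm : n < m) {x : C} (hx : x ∈ 𝒜 n) : (f ^ m) x = 0 := by
  induction m generalizing n x with
  | zero => omega
  | succ m ih =>
    rw [pow_succ']
    refine h𝒜.apply_comul_eq (D₁ := LinearMap.mul' R A ∘ₗ TensorProduct.map f.ofConv (f ^ m).ofConv)
      (D₂ := 0) hx fun i j hij a ha b hb ↦ ?_
    rcases i.eq_zero_or_pos with rfl | hi
    · simp [hf a ha]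
    · simp [ih (by omega) hb]

theorem isUnit_one_sub [Coalgebra R C] [Ring A] [Algebra R A] (h𝒜 : IsGradedComul 𝒜)
    (hdecomp : DirectSum.IsInternal 𝒜) {f : WithConv (C →ₗ[R] A)} (hf : ∀ a ∈ 𝒜 0, f a = 0) :
    IsUnit (1 - f) := by
  have hnil {m n : ℕ} (hnm : n < m) {x : C} (hx : x ∈ 𝒜 n) : (f ^ m) x = 0 :=
    h𝒜.convPow_apply_eq_zero hf hnm hx
  obtain ⟨S, hS⟩ := hdecomp.exists_linearMap_eqOn fun n ↦ (∑ i ∈ Finset.range (n + 1), f ^ i).ofConv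
  have hS_eq_geomSum {M n : ℕ} (hnM : n < M) {x : C} (hx : x ∈ 𝒜 n) :
      S x = (∑ i ∈ Finset.range M, f ^ i) x := by
    simp only [hS n x hx, ofConv_sum, LinearMap.sum_apply]
    rw [Finset.eventually_constant_sum (fun i hi ↦ hnil hi hx) le_rfl,
      Finset.eventually_constant_sum (fun i hi ↦ hnil hi hx) hnM]
  have hS_mul : ∀ n, ∀ x ∈ 𝒜 n, (toConv S * (1 - f)) x = (1 : WithConv (C →ₗ[R] A)) x := by
    intro n x hx
    rw [h𝒜.convMul_apply_congr (fun i hi a ha ↦ hS_eq_geomSum (Nat.lt_succ_of_le hi) ha)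
      (fun _ _ _ _ ↦ rfl) hx, geom_sum_mul_neg]
    simp [hnil (lt_add_one n) hx]
  have mul_hS : ∀ n, ∀ x ∈ 𝒜 n, ((1 - f) * toConv S) x = (1 : WithConv (C →ₗ[R] A)) x := by
    intro n x hx
    rw [h𝒜.convMul_apply_congr (fun _ _ _ _ ↦ rfl)
      (fun i hi a ha ↦ hS_eq_geomSum (Nat.lt_succ_of_le hi) ha) hx, mul_neg_geom_sum]
    simp [hnil (lt_add_one n) hx]
  have hspan := hdecomp.submodule_iSup_eq_top
  exact isUnit_iff_exists.2 ⟨toConv S, WithConv.ext (LinearMap.ext_of_iSup_eq_top hspan mul_hS),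
    WithConv.ext (LinearMap.ext_of_iSup_eq_top hspan hS_mul)⟩

end IsGradedComul

theorem Bialgebra.one_sub_toConv_id_apply_eq_zero {R H : Type*} [CommSemiring R] [Ring H]
    [Bialgebra R H] {x : H} (hx : x ∈ Submodule.span R {1}) :
    (1 - toConv (LinearMap.id : H →ₗ[R] H)) x = 0 := by
  obtain ⟨c, rfl⟩ := Submodule.mem_span_singleton.1 hx
  simp [Algebra.smul_def]

theorem connected_graded_bialgebra_has_antipode_general
    (k H : Type) [Field k] [Ring H] [Bialgebra k H]
    (𝒜 : ℕ → Submodule k H)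
    (hdecomp : DirectSum.IsInternal 𝒜)
    (hcomul : ∀ n : ℕ,
      (𝒜 n).map (Coalgebra.comul (R := k) (A := H)) ≤
        ⨆ (p : ℕ × ℕ) (_ : p.1 + p.2 = n),
          Submodule.map₂ (TensorProduct.mk k H H) (𝒜 p.1) (𝒜 p.2))
    (hconn : 𝒜 0 = Submodule.span k {(1 : H)}) :
    ∃ S : H →ₗ[k] H,
      LinearMap.mul' k H ∘ₗ TensorProduct.map S LinearMap.id ∘ₗ Coalgebra.comul (R := k) =
        Algebra.linearMap k H ∘ₗ Coalgebra.counit (R := k) ∧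
      LinearMap.mul' k H ∘ₗ TensorProduct.map LinearMap.id S ∘ₗ Coalgebra.comul (R := k) =
        Algebra.linearMap k H ∘ₗ Coalgebra.counit (R := k) := by
  have hunit : IsUnit (toConv (LinearMap.id : H →ₗ[k] H)) := by
    simpa using IsGradedComul.isUnit_one_sub hcomul hdecomp
      fun a ha ↦ Bialgebra.one_sub_toConv_id_apply_eq_zero (hconn ▸ ha)
  exact ⟨(↑hunit.unit⁻¹ : WithConv (H →ₗ[k] H)).ofConv,
    congrArg ofConv hunit.val_inv_mul, congrArg ofConv hunit.mul_val_inv⟩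

/-- A connected graded bialgebra over a field admits an antipode: if `H`
is a `k`-bialgebra with a grading `𝒜 : ℕ → Submodule k H` (internal direct sum,
`𝒜 i · 𝒜 j ⊆ 𝒜 (i+j)`, `Δ(𝒜 n) ⊆ ∑_{i+j=n} 𝒜 i ⊗ 𝒜 j`, `𝒜 0 = k·1`), then there is a
`k`-linear map `S : H → H` with `m ∘ (S ⊗ id) ∘ Δ = η ∘ ε = m ∘ (id ⊗ S) ∘ Δ`, making `H`
a Hopf algebra. -/
theorem connected_graded_bialgebra_has_antipode
    (k H : Type) [Field k] [Ring H] [Bialgebra k H]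
    (𝒜 : ℕ → Submodule k H)
    (hdecomp : DirectSum.IsInternal 𝒜)
    (hmul : ∀ i j : ℕ, 𝒜 i * 𝒜 j ≤ 𝒜 (i + j))
    (hcomul : ∀ n : ℕ,
      (𝒜 n).map (Coalgebra.comul (R := k) (A := H)) ≤
        ⨆ (p : ℕ × ℕ) (_ : p.1 + p.2 = n),
          Submodule.map₂ (TensorProduct.mk k H H) (𝒜 p.1) (𝒜 p.2))
    (hconn : 𝒜 0 = Submodule.span k {(1 : H)}) :
    ∃ S : H →ₗ[k] H,
      LinearMap.mul' k H ∘ₗ TensorProduct.map S LinearMap.id ∘ₗ Coalgebra.comul (R := k) =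
        Algebra.linearMap k H ∘ₗ Coalgebra.counit (R := k) ∧
      LinearMap.mul' k H ∘ₗ TensorProduct.map LinearMap.id S ∘ₗ Coalgebra.comul (R := k) =
        Algebra.linearMap k H ∘ₗ Coalgebra.counit (R := k) :=
  connected_graded_bialgebra_has_antipode_general k H 𝒜 hdecomp hcomul hconn
end

section
/- Fix k ≥ 1 and N ≥ 1, with R = ℂ[[λ_1,…,λ_k,φ_1,…,φ_N]] and the group G = { Ψ_{f,w} } of substitution automorphisms λ_i ↦ f_i, φ_j ↦ w_j·φ_j as above (f ∈ D_k, each w_j ∈ ℂ[[λ_1,…,λ_k]] with constant coefficient 1). Then: (1) the subset N₀ := { Ψ_{f,w} ∈ G : f_i = λ_i for all i } is a normal subgroup of G, and the map w ↦ Ψ_{id,w} is a group isomorphism from the direct product of N copies of the multiplicative group of power series in ℂ[[λ_1,…,λ_k]] with constant coefficient 1 (a subgroup of the units ℂ[[λ_1,…,λ_k]]^×) onto N₀; (2) the assignment Ψ_{f,w} ↦ f is a surjective group homomorphism from G onto the opposite group of D_k with kernel N₀, and it is split by f ↦ Ψ_{f,(1,…,1)}; consequently G is isomorphic to the semidirect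 product N₀ ⋊ D_k^{op}. (This is the statement that the renormalization group of transformations of fields and coupling constants is the semidirect product (ℂ[[λ_1,…,λ_k]]^×)^N ⋊ Diff(ℂ^k,0), with the invertible series acting as wave function renormalization and the diffeomorphisms acting on the coupling constants.) -/
/-- Substitution of multivariate formal power series: `mvSubst a f` is
`f(a₁, …)`, i.e. `∑_e (coeff e f) · ∏ᵢ (a i)^(e i)`.  When every `a i` has zero constant
coefficient, only exponents `e` of total degree at most the total degree of `d`
contribute to the coefficient at `d`, so the following finite sum computes the
substitution. -/
noncomputable def mvSubst {σ τ : Type} [Fintype σ] [DecidableEq σ]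
    (a : σ → MvPowerSeries τ ℂ) (f : MvPowerSeries σ ℂ) : MvPowerSeries τ ℂ :=
  fun d =>
    ∑ e ∈ Finset.Iic (Finsupp.equivFunOnFinite.symm fun _ : σ => d.sum fun _ n => n),
      MvPowerSeries.coeff e f * MvPowerSeries.coeff d (e.prod fun i n => a i ^ n)

/-- `R = ℂ[[λ₁,…,λ_k,φ₁,…,φ_N]]`. -/
abbrev Rkn (k N : ℕ) : Type := MvPowerSeries (Fin k ⊕ Fin N) ℂ

/-- A series in `R` involves only the `λ`-variables. -/
def OnlyLambda {k N : ℕ} (p : Rkn k N) : Prop :=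
  ∀ d : (Fin k ⊕ Fin N) →₀ ℕ, (∃ j : Fin N, d (Sum.inr j) ≠ 0) →
    MvPowerSeries.coeff d p = 0

/-- `f ∈ D_k`: a `k`-tuple of series in the `λ`-variables only, with `fᵢ = λᵢ·uᵢ`, `uᵢ`
of constant coefficient `1`. -/
def IsDkTuple {k N : ℕ} (f : Fin k → Rkn k N) : Prop :=
  ∀ i : Fin k, OnlyLambda (f i) ∧ ∃ u : Rkn k N,
    f i = MvPowerSeries.X (Sum.inl i) * u ∧ MvPowerSeries.constantCoeff u = 1

/-- `w`: an `N`-tuple of series in the `λ`-variables only, each of constant coeff `1`. -/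
def IsWTuple {k N : ℕ} (w : Fin N → Rkn k N) : Prop :=
  ∀ j : Fin N, OnlyLambda (w j) ∧ MvPowerSeries.constantCoeff (w j) = 1

/-- The substitution data of `Ψ_{f,w}`: `λᵢ ↦ fᵢ`, `φⱼ ↦ wⱼ·φⱼ`. -/
noncomputable def subMap {k N : ℕ} (f : Fin k → Rkn k N) (w : Fin N → Rkn k N) :
    Fin k ⊕ Fin N → Rkn k N :=
  Sum.elim f fun j => w j * MvPowerSeries.X (Sum.inr j)

/-- `ψ` is one of the renormalization substitution automorphisms `Ψ_{f,w}`. -/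
def IsPsi {k N : ℕ} (ψ : Rkn k N ≃ₐ[ℂ] Rkn k N) : Prop :=
  ∃ (f : Fin k → Rkn k N) (w : Fin N → Rkn k N), IsDkTuple f ∧ IsWTuple w ∧
    ∀ g : Rkn k N, ψ g = mvSubst (subMap f w) g

/-- `ψ = Ψ_{f,w}` with `f` the identity tuple (`fᵢ = λᵢ`): pure wave function
renormalization. -/
def IsPsiId {k N : ℕ} (ψ : Rkn k N ≃ₐ[ℂ] Rkn k N) : Prop :=
  ∃ w : Fin N → Rkn k N, IsWTuple w ∧
    ∀ g : Rkn k N, ψ g = mvSubst (subMap (fun i => MvPowerSeries.X (Sum.inl i)) w) g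

/-- `ψ = Ψ_{f,1}`: a pure formal diffeomorphism of the coupling constants. -/
def IsPsiDiff {k N : ℕ} (ψ : Rkn k N ≃ₐ[ℂ] Rkn k N) : Prop :=
  ∃ f : Fin k → Rkn k N, IsDkTuple f ∧
    ∀ g : Rkn k N, ψ g = mvSubst (subMap f fun _ => (1 : Rkn k N)) g

/-!
Every `Ψ_{f,w}` is the substitution of the images of the variables, so everything reduces to
computations on `λᵢ` and `φⱼ`. The key tool is the substitution `ε : φ ↦ 0` (`lambdaPart`): a
series involves only the `λ`'s iff `ε` fixes it, and every `Ψ_{f,w}` commutes with `ε`, hence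
preserves and reflects this property. This makes `G` closed under composition and inversion,
shows that `Ψ_{id,w}` fixes every series in the `λ`'s (so `N₀` is normal in `G`), and yields the
factorization `Ψ_{f,w} = Ψ_{id,w} ∘ Ψ_{f,1}`. As an element fixing all variables is the identity,
`N₀ ∩ D = 1`, and `G = N₀ ⋊ D` is then pure group theory.
-/

open MvPowerSeries

namespace MvPowerSeries

section SubstMap

variable {σ R : Type*} [CommRing R]

theorem constantCoeff_subst_of_constantCoeff_eq_zero [Finite σ] {a : σ → MvPowerSeries σ R}
    (ha : ∀ s, constantCoeff (a s) = 0) (p : MvPowerSeries σ R) :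
    constantCoeff (subst a p) = constantCoeff p := by
  have hsplit : p = C (constantCoeff p) + (p - C (constantCoeff p)) := by ring
  have hsub : constantCoeff (p - C (constantCoeff p)) = 0 := by simp
  rw [hsplit, subst_add (hasSubst_of_constantCoeff_zero ha), subst_C, map_add,
    constantCoeff_subst_eq_zero (hasSubst_of_constantCoeff_zero ha) ha hsub]
  simp

def IsSubstMap (F : MvPowerSeries σ R → MvPowerSeries σ R) : Prop :=
  ∃ a : σ → MvPowerSeries σ R, (∀ s, constantCoeff (a s) = 0) ∧ F = subst a

theorem isSubstMap_subst {a : σ → MvPowerSeries σ R} (ha : ∀ s, constantCoeff (a s) = 0) :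
    IsSubstMap (subst (R := R) a) :=
  ⟨a, ha, rfl⟩

theorem isSubstMap_id : IsSubstMap (id : MvPowerSeries σ R → MvPowerSeries σ R) :=
  ⟨X, constantCoeff_X, subst_self.symm⟩

variable [Finite σ] {F G : MvPowerSeries σ R → MvPowerSeries σ R}

namespace IsSubstMap

theorem eq_subst (hF : IsSubstMap F) : F = subst fun s => F (X s) := by
  obtain ⟨a, ha, rfl⟩ := hF
  simp_rw [subst_X (hasSubst_of_constantCoeff_zero ha)]

theorem constantCoeff_apply (hF : IsSubstMap F) (p : MvPowerSeries σ R) :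
    constantCoeff (F p) = constantCoeff p := by
  obtain ⟨a, ha, rfl⟩ := hF
  exact constantCoeff_subst_of_constantCoeff_eq_zero ha p

theorem ext (hF : IsSubstMap F) (hG : IsSubstMap G) (h : ∀ s, F (X s) = G (X s)) : F = G := by
  rw [hF.eq_subst, hG.eq_subst, funext h]

theorem comp (hF : IsSubstMap F) (hG : IsSubstMap G) : IsSubstMap (F ∘ G) := by
  obtain ⟨a, ha, rfl⟩ := hF
  obtain ⟨b, hb, rfl⟩ := hG
  refine ⟨fun s => subst a (b s), fun s => ?_, ?_⟩
  · rw [constantCoeff_subst_of_constantCoeff_eq_zero ha, hb]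
  · funext p
    exact subst_comp_subst_apply (hasSubst_of_constantCoeff_zero hb)
      (hasSubst_of_constantCoeff_zero ha) p

theorem symm {ψ : MvPowerSeries σ R ≃ₐ[R] MvPowerSeries σ R} (hψ : IsSubstMap ψ) :
    IsSubstMap ψ.symm := by
  have hb : ∀ s, constantCoeff (ψ.symm (X s)) = 0 := fun s => by
    rw [← hψ.constantCoeff_apply, ψ.apply_symm_apply, constantCoeff_X]
  have hcomp : ψ ∘ subst (fun s => ψ.symm (X s)) = id :=
    hψ.comp (isSubstMap_subst hb) |>.ext isSubstMap_id fun s => by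
      simp [subst_X (hasSubst_of_constantCoeff_zero hb)]
  exact ⟨_, hb, funext fun p =>
    (congrArg ψ.symm (congrFun hcomp p)).symm.trans (ψ.symm_apply_apply _)⟩

end IsSubstMap

theorem subst_subst_of_subst_eq_X {a b : σ → MvPowerSeries σ R}
    (ha : ∀ s, constantCoeff (a s) = 0) (hb : ∀ s, constantCoeff (b s) = 0)
    (hab : ∀ s, subst a (b s) = X s) (p : MvPowerSeries σ R) :
    subst a (subst (R := R) b p) = p :=
  congrFun (((isSubstMap_subst ha).comp (isSubstMap_subst hb)).ext isSubstMap_id fun s => by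
    simp [subst_X (hasSubst_of_constantCoeff_zero hb), hab]) p

noncomputable def substAlgEquiv {a b : σ → MvPowerSeries σ R}
    (ha : ∀ s, constantCoeff (a s) = 0) (hb : ∀ s, constantCoeff (b s) = 0)
    (hab : ∀ s, subst a (b s) = X s) (hba : ∀ s, subst b (a s) = X s) :
    MvPowerSeries σ R ≃ₐ[R] MvPowerSeries σ R :=
  AlgEquiv.ofAlgHom (substAlgHom (hasSubst_of_constantCoeff_zero ha))
    (substAlgHom (hasSubst_of_constantCoeff_zero hb))
    (AlgHom.ext fun p => by simpa using subst_subst_of_subst_eq_X ha hb hab p)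
    (AlgHom.ext fun p => by simpa using subst_subst_of_subst_eq_X hb ha hba p)

@[simp]
theorem coe_substAlgEquiv {a b : σ → MvPowerSeries σ R}
    (ha : ∀ s, constantCoeff (a s) = 0) (hb : ∀ s, constantCoeff (b s) = 0)
    (hab : ∀ s, subst a (b s) = X s) (hba : ∀ s, subst b (a s) = X s) :
    ⇑(substAlgEquiv ha hb hab hba) = subst a :=
  coe_substAlgHom (hasSubst_of_constantCoeff_zero ha)

end SubstMap

theorem coeff_prod_pow_eq_zero_of_degree_lt {σ τ R : Type*} [CommSemiring R]
    {a : σ → MvPowerSeries τ R} (ha : ∀ s, constantCoeff (a s) = 0) {d : τ →₀ ℕ}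
    {e : σ →₀ ℕ} (h : d.degree < e.degree) :
    coeff d (e.prod fun s n => a s ^ n) = 0 := by
  apply coeff_of_lt_order
  calc (d.degree : ℕ∞) < e.degree := by exact_mod_cast h
    _ = ∑ s ∈ e.support, (e s : ℕ∞) := by simp [Finsupp.degree_apply]
    _ ≤ ∑ s ∈ e.support, (a s ^ e s).order :=
      Finset.sum_le_sum fun s _ => le_order_pow_of_constantCoeff_eq_zero _ (ha s)
    _ ≤ _ := le_order_prod _ _

end MvPowerSeries

namespace Subgroup

variable {E : Type*} [Group E]

structure IsInternalSemidirect (G N D : Subgroup E) : Prop where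
  le_left : N ≤ G
  le_right : D ≤ G
  conj_mem : ∀ g ∈ G, ∀ n ∈ N, g * n * g⁻¹ ∈ N
  disjoint : Disjoint N D
  exists_mul_eq : ∀ g ∈ G, ∃ n ∈ N, ∃ d ∈ D, n * d = g

namespace IsInternalSemidirect

variable {G N D : Subgroup E} (h : IsInternalSemidirect G N D)
include h

theorem exists_inv_mul_mem (g : G) : ∃ d : D, (d : E)⁻¹ * g ∈ N := by
  obtain ⟨n, hn, d, hd, hnd⟩ := h.exists_mul_eq g g.2
  refine ⟨⟨d, hd⟩, ?_⟩
  have := h.conj_mem _ (G.inv_mem (h.le_right hd)) n hn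
  rw [inv_inv] at this
  rwa [← hnd, ← mul_assoc]

theorem eq_of_inv_mul_mem {g : E} {d d' : D} (hd : (d : E)⁻¹ * g ∈ N)
    (hd' : (d' : E)⁻¹ * g ∈ N) : d = d' := by
  have hmem : (d : E)⁻¹ * d' ∈ N := by
    simpa [mul_assoc] using N.mul_mem hd (N.inv_mem hd')
  have := disjoint_def.1 h.disjoint hmem (D.mul_mem (D.inv_mem d.2) d'.2)
  exact Subtype.ext (inv_mul_eq_one.1 this)

noncomputable def proj : G →* D where
  toFun g := (h.exists_inv_mul_mem g).choose
  map_one' := h.eq_of_inv_mul_mem (h.exists_inv_mul_mem 1).choose_spec (by simp)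
  map_mul' g₁ g₂ := by
    have h₁ := (h.exists_inv_mul_mem g₁).choose_spec
    have h₂ := (h.exists_inv_mul_mem g₂).choose_spec
    set d₁ := (h.exists_inv_mul_mem g₁).choose
    set d₂ := (h.exists_inv_mul_mem g₂).choose
    refine h.eq_of_inv_mul_mem (h.exists_inv_mul_mem _).choose_spec ?_
    have := N.mul_mem (h.conj_mem _ (G.inv_mem (h.le_right d₂.2)) _ h₁) h₂
    convert this using 1
    push_cast
    group

theorem proj_eq_iff {g : G} {d : D} : h.proj g = d ↔ (d : E)⁻¹ * g ∈ N :=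
  ⟨fun hd => hd ▸ (h.exists_inv_mul_mem g).choose_spec,
    h.eq_of_inv_mul_mem (h.exists_inv_mul_mem g).choose_spec⟩

theorem proj_eq_one_iff (g : G) : h.proj g = 1 ↔ (g : E) ∈ N := by
  simp [h.proj_eq_iff]

theorem proj_inclusion (d : D) : h.proj (inclusion h.le_right d) = d :=
  h.proj_eq_iff.2 (by simp)

theorem proj_surjective : Function.Surjective h.proj :=
  fun d => ⟨_, h.proj_inclusion d⟩

noncomputable def toGroupExtension : GroupExtension N G D where
  inl := inclusion h.le_left
  rightHom := h.proj
  inl_injective := inclusion_injective _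
  range_inl_eq_ker_rightHom := by
    ext g
    simp [inclusion_range, mem_subgroupOf, h.proj_eq_one_iff]
  rightHom_surjective := h.proj_surjective

noncomputable def splitting : h.toGroupExtension.Splitting where
  toMonoidHom := inclusion h.le_right
  rightInverse_rightHom := h.proj_inclusion

end IsInternalSemidirect

end Subgroup

theorem mvSubst_eq_subst {σ τ : Type} [Fintype σ] [DecidableEq σ]
    {a : σ → MvPowerSeries τ ℂ} (ha : ∀ s, constantCoeff (a s) = 0) :
    mvSubst a = subst a := by
  funext f
  ext d
  rw [coeff_subst (hasSubst_of_constantCoeff_zero ha), finsum_eq_sum_of_support_subset _ ?_]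
  · rfl
  intro e he
  by_contra hbox
  refine he (smul_eq_zero_of_right _ (coeff_prod_pow_eq_zero_of_degree_lt ha ?_))
  obtain ⟨s, hs⟩ : ∃ s, (d.sum fun _ n => n) < e s := by simpa [Finsupp.le_def] using hbox
  exact hs.trans_le (Finsupp.le_degree s e)

theorem forall_eq_mvSubst_iff {σ : Type} [Fintype σ] [DecidableEq σ]
    {F : MvPowerSeries σ ℂ → MvPowerSeries σ ℂ} {a : σ → MvPowerSeries σ ℂ}
    (ha : ∀ s, constantCoeff (a s) = 0) :
    (∀ g, F g = mvSubst a g) ↔ IsSubstMap F ∧ ∀ s, F (X s) = a s := by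
  rw [mvSubst_eq_subst ha]
  constructor
  · intro h
    obtain rfl : F = subst a := funext h
    exact ⟨isSubstMap_subst ha, subst_X (hasSubst_of_constantCoeff_zero ha)⟩
  · rintro ⟨hF, hX⟩ g
    rw [hF.eq_subst, funext hX]

section Renormalization

variable {k N : ℕ}

theorem constantCoeff_subMap {f : Fin k → Rkn k N} (hf : ∀ i, constantCoeff (f i) = 0)
    (w : Fin N → Rkn k N) : ∀ s, constantCoeff (subMap f w s) = 0
  | .inl i => hf i
  | .inr j => by simp [subMap]

theorem IsDkTuple.constantCoeff_eq_zero {f : Fin k → Rkn k N} (hf : IsDkTuple f) (i : Fin k) :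
    constantCoeff (f i) = 0 := by
  obtain ⟨-, u, hu, -⟩ := hf i
  simp [hu]

variable (k N) in
noncomputable def lambdaPart : Rkn k N →ₐ[ℂ] Rkn k N :=
  substAlgHom (hasSubst_of_constantCoeff_zero (a := Sum.elim (fun i => X (Sum.inl i)) 0)
    (by rintro (i | j) <;> simp))

theorem coe_lambdaPart :
    ⇑(lambdaPart k N) = subst (R := ℂ) (Sum.elim (fun i => X (Sum.inl i)) 0) :=
  coe_substAlgHom _

theorem isSubstMap_lambdaPart : IsSubstMap (lambdaPart k N) := by
  rw [coe_lambdaPart]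
  exact isSubstMap_subst (by rintro (i | j) <;> simp)

@[simp]
theorem lambdaPart_X_inl (i : Fin k) : lambdaPart k N (X (.inl i)) = X (.inl i) :=
  substAlgHom_X _ _

@[simp]
theorem lambdaPart_X_inr (j : Fin N) : lambdaPart k N (X (.inr j)) = 0 :=
  substAlgHom_X _ _

theorem coeff_lambdaPart (d : (Fin k ⊕ Fin N) →₀ ℕ) (p : Rkn k N) :
    coeff d (lambdaPart k N p) = if ∀ j, d (.inr j) = 0 then coeff d p else 0 := by
  have hres : lambdaPart k N p = rescale (Sum.elim 1 0) p := by
    rw [rescale_eq_subst, coe_lambdaPart]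
    congr 1
    funext s
    rcases s with i | j <;> simp
  rw [hres, coeff_rescale]
  split_ifs with h
  · rw [Finsupp.prod, Finset.prod_eq_one, one_mul]
    rintro (i | j) _ <;> simp [h]
  · obtain ⟨j, hj⟩ := not_forall.1 h
    rw [Finsupp.prod, Finset.prod_eq_zero (Finsupp.mem_support_iff.2 hj) (by simp [hj]), zero_mul]

theorem onlyLambda_iff {p : Rkn k N} : OnlyLambda p ↔ lambdaPart k N p = p := by
  refine ⟨fun hp => ?_, fun hp d hd => ?_⟩
  · ext d
    rw [coeff_lambdaPart]
    split_ifs with h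
    · rfl
    · exact (hp d (not_forall.1 h)).symm
  · rw [← hp, coeff_lambdaPart, if_neg (not_forall.2 hd)]

theorem onlyLambda_one : OnlyLambda (1 : Rkn k N) :=
  onlyLambda_iff.2 (map_one _)

theorem onlyLambda_X_inl (i : Fin k) : OnlyLambda (X (.inl i) : Rkn k N) :=
  onlyLambda_iff.2 (lambdaPart_X_inl i)

theorem OnlyLambda.mul {p q : Rkn k N} (hp : OnlyLambda p) (hq : OnlyLambda q) :
    OnlyLambda (p * q) := by
  rw [onlyLambda_iff] at *
  rw [map_mul, hp, hq]

theorem OnlyLambda.of_mul_eq_one {p q : Rkn k N} (hp : OnlyLambda p) (h : p * q = 1) :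
    OnlyLambda q := by
  rw [onlyLambda_iff] at *
  calc lambdaPart k N q = lambdaPart k N q * (p * q) := by rw [h, mul_one]
    _ = lambdaPart k N (q * p) * q := by rw [map_mul, hp, mul_assoc]
    _ = q := by rw [mul_comm q, h, map_one, one_mul]

theorem subst_eq_self_of_onlyLambda {a : Fin k ⊕ Fin N → Rkn k N}
    (ha : ∀ s, constantCoeff (a s) = 0) (hX : ∀ i, a (.inl i) = X (.inl i)) {p : Rkn k N}
    (hp : OnlyLambda p) : subst a p = p := by
  have hcomp : subst a ∘ lambdaPart k N = lambdaPart k N :=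
    (isSubstMap_subst ha).comp isSubstMap_lambdaPart |>.ext isSubstMap_lambdaPart <| by
      rintro (i | j)
      · rw [Function.comp_apply, lambdaPart_X_inl, subst_X (hasSubst_of_constantCoeff_zero ha), hX]
      · rw [Function.comp_apply, lambdaPart_X_inr,
          ← coe_substAlgHom (hasSubst_of_constantCoeff_zero ha), map_zero]
  rw [← onlyLambda_iff.1 hp]
  exact congrFun hcomp p

theorem subMap_inr (f : Fin k → Rkn k N) (w : Fin N → Rkn k N) (j : Fin N) :
    subMap f w (.inr j) = w j * X (.inr j) :=
  rfl

theorem isDkTuple_X : IsDkTuple (fun i => X (.inl i) : Fin k → Rkn k N) :=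
  fun i => ⟨onlyLambda_X_inl i, 1, (mul_one _).symm, map_one _⟩

theorem isWTuple_one : IsWTuple (fun _ => 1 : Fin N → Rkn k N) :=
  fun _ => ⟨onlyLambda_one, map_one _⟩

theorem IsWTuple.mul {w w' : Fin N → Rkn k N} (hw : IsWTuple w) (hw' : IsWTuple w') :
    IsWTuple fun j => w j * w' j :=
  fun j => ⟨(hw j).1.mul (hw' j).1, by rw [map_mul, (hw j).2, (hw' j).2, one_mul]⟩

theorem IsDkTuple.forall_eq_mvSubst_iff {F : Rkn k N → Rkn k N} {f : Fin k → Rkn k N}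
    (hf : IsDkTuple f) (w : Fin N → Rkn k N) :
    (∀ g, F g = mvSubst (subMap f w) g) ↔ IsSubstMap F ∧ ∀ s, F (X s) = subMap f w s :=
  _root_.forall_eq_mvSubst_iff (constantCoeff_subMap hf.constantCoeff_eq_zero w)

theorem isPsi_iff {ψ : Rkn k N ≃ₐ[ℂ] Rkn k N} :
    IsPsi ψ ↔ IsSubstMap ψ ∧ IsDkTuple (fun i => ψ (X (.inl i))) ∧
      ∃ w, IsWTuple w ∧ ∀ j, ψ (X (.inr j)) = w j * X (.inr j) := by
  constructor
  · rintro ⟨f, w, hf, hw, he⟩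
    obtain ⟨hψ, hX⟩ := (hf.forall_eq_mvSubst_iff w).1 he
    obtain rfl : f = fun i => ψ (X (.inl i)) := funext fun i => (hX (.inl i)).symm
    exact ⟨hψ, hf, w, hw, fun j => hX (.inr j)⟩
  · rintro ⟨hψ, hf, w, hw, hX⟩
    exact ⟨_, w, hf, hw, (hf.forall_eq_mvSubst_iff w).2
      ⟨hψ, fun | .inl _ => rfl | .inr j => hX j⟩⟩

theorem isPsiId_iff {ψ : Rkn k N ≃ₐ[ℂ] Rkn k N} :
    IsPsiId ψ ↔ IsPsi ψ ∧ ∀ i, ψ (X (.inl i)) = X (.inl i) := by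
  constructor
  · rintro ⟨w, hw, he⟩
    have hX := (isDkTuple_X.forall_eq_mvSubst_iff w).1 he |>.2
    exact ⟨⟨_, w, isDkTuple_X, hw, he⟩, fun i => hX (.inl i)⟩
  · rintro ⟨⟨f, w, hf, hw, he⟩, hfix⟩
    have hX := (hf.forall_eq_mvSubst_iff w).1 he |>.2
    obtain rfl : f = fun i => X (.inl i) := funext fun i => (hX (.inl i)).symm.trans (hfix i)
    exact ⟨w, hw, he⟩

theorem isPsiDiff_iff {ψ : Rkn k N ≃ₐ[ℂ] Rkn k N} :
    IsPsiDiff ψ ↔ IsPsi ψ ∧ ∀ j, ψ (X (.inr j)) = X (.inr j) := by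
  constructor
  · rintro ⟨f, hf, he⟩
    have hX := (hf.forall_eq_mvSubst_iff _).1 he |>.2
    exact ⟨⟨f, _, hf, isWTuple_one, he⟩, fun j => (hX (.inr j)).trans (one_mul _)⟩
  · rintro ⟨⟨f, w, hf, hw, he⟩, hfix⟩
    have hX := (hf.forall_eq_mvSubst_iff w).1 he |>.2
    obtain rfl : w = fun _ => 1 := funext fun j => mul_right_cancel₀
      (nonZeroDivisors.ne_zero X_mem_nonzeroDivisors)
      ((hX (.inr j)).symm.trans ((hfix j).trans (one_mul _).symm))
    exact ⟨f, hf, he⟩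

theorem IsPsi.lambdaPart_apply {ψ : Rkn k N ≃ₐ[ℂ] Rkn k N} (h : IsPsi ψ) (p : Rkn k N) :
    lambdaPart k N (ψ p) = ψ (lambdaPart k N p) := by
  obtain ⟨hψ, hf, w, -, hX⟩ := isPsi_iff.1 h
  refine congrFun ((isSubstMap_lambdaPart.comp hψ).ext (hψ.comp isSubstMap_lambdaPart) ?_) p
  rintro (i | j)
  · simp [onlyLambda_iff.1 (hf i).1]
  · simp [hX j]

theorem IsPsi.onlyLambda_apply_iff {ψ : Rkn k N ≃ₐ[ℂ] Rkn k N} (h : IsPsi ψ) {p : Rkn k N} :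
    OnlyLambda (ψ p) ↔ OnlyLambda p := by
  rw [onlyLambda_iff, onlyLambda_iff, h.lambdaPart_apply, ψ.injective.eq_iff]

theorem IsDkTuple.map {ψ : Rkn k N ≃ₐ[ℂ] Rkn k N} (h : IsPsi ψ) {f : Fin k → Rkn k N}
    (hf : IsDkTuple f) : IsDkTuple fun i => ψ (f i) := by
  obtain ⟨hψ, hψf, -⟩ := isPsi_iff.1 h
  intro i
  obtain ⟨hfi, u, hu, hu1⟩ := hf i
  obtain ⟨-, v, hv, hv1⟩ := hψf i
  dsimp only at hv ⊢
  refine ⟨h.onlyLambda_apply_iff.2 hfi, v * ψ u, ?_, ?_⟩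
  · rw [hu, map_mul, hv, mul_assoc]
  · rw [map_mul, hv1, hψ.constantCoeff_apply, hu1, one_mul]

theorem IsWTuple.map {ψ : Rkn k N ≃ₐ[ℂ] Rkn k N} (h : IsPsi ψ) {w : Fin N → Rkn k N}
    (hw : IsWTuple w) : IsWTuple fun j => ψ (w j) :=
  fun j => ⟨h.onlyLambda_apply_iff.2 (hw j).1,
    ((isPsi_iff.1 h).1.constantCoeff_apply _).trans (hw j).2⟩

theorem IsPsi.mul {ψ₁ ψ₂ : Rkn k N ≃ₐ[ℂ] Rkn k N} (h₁ : IsPsi ψ₁) (h₂ : IsPsi ψ₂) :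
    IsPsi (ψ₁ * ψ₂) := by
  obtain ⟨hψ₁, -, w₁, hw₁, hX₁⟩ := isPsi_iff.1 h₁
  obtain ⟨hψ₂, hf₂, w₂, hw₂, hX₂⟩ := isPsi_iff.1 h₂
  refine isPsi_iff.2 ⟨hψ₁.comp hψ₂, hf₂.map h₁, _, (hw₂.map h₁).mul hw₁, fun j => ?_⟩
  rw [AlgEquiv.mul_apply, hX₂, map_mul, hX₁, mul_assoc]

theorem IsPsi.inv {ψ : Rkn k N ≃ₐ[ℂ] Rkn k N} (h : IsPsi ψ) : IsPsi ψ⁻¹ := by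
  obtain ⟨hψ, hf, w, hw, hX⟩ := isPsi_iff.1 h
  have honly : ∀ q, OnlyLambda q → OnlyLambda (ψ.symm q) := fun q hq =>
    h.onlyLambda_apply_iff.1 (by rwa [ψ.apply_symm_apply])
  have hcc : ∀ q, constantCoeff (ψ.symm q) = constantCoeff q := hψ.symm.constantCoeff_apply
  rw [AlgEquiv.aut_inv]
  refine isPsi_iff.2 ⟨hψ.symm, fun i => ?_, fun j => (ψ.symm (w j))⁻¹, fun j => ?_, fun j => ?_⟩
  · obtain ⟨-, u, hu, hu1⟩ := hf i
    refine ⟨honly _ (onlyLambda_X_inl i), (ψ.symm u)⁻¹, ?_, by simp [hcc, hu1]⟩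
    rw [MvPowerSeries.eq_mul_inv_iff_mul_eq (by simp [hcc, hu1]), ← map_mul, ← hu,
      ψ.symm_apply_apply]
  · have hw1 : constantCoeff (ψ.symm (w j)) = 1 := by rw [hcc, (hw j).2]
    exact ⟨(honly _ (hw j).1).of_mul_eq_one (MvPowerSeries.mul_inv_cancel _ (by simp [hw1])),
      by simp [hw1]⟩
  · dsimp only
    rw [mul_comm, MvPowerSeries.eq_mul_inv_iff_mul_eq (by simp [hcc, (hw j).2]), mul_comm,
      ← map_mul, ← hX j, ψ.symm_apply_apply]

variable (k N) in
noncomputable def psiGroup : Subgroup (Rkn k N ≃ₐ[ℂ] Rkn k N) where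
  carrier := {ψ | IsPsi ψ}
  one_mem' := isPsi_iff.2 ⟨isSubstMap_id, isDkTuple_X, _, isWTuple_one, fun _ => (one_mul _).symm⟩
  mul_mem' := IsPsi.mul
  inv_mem' := IsPsi.inv

variable (k N) in
noncomputable def psiIdSubgroup : Subgroup (Rkn k N ≃ₐ[ℂ] Rkn k N) :=
  psiGroup k N ⊓ fixingSubgroup _ (Set.range fun i => (X (.inl i) : Rkn k N))

variable (k N) in
noncomputable def psiDiffSubgroup : Subgroup (Rkn k N ≃ₐ[ℂ] Rkn k N) :=
  psiGroup k N ⊓ fixingSubgroup _ (Set.range fun j => (X (.inr j) : Rkn k N))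

theorem psiIdSubgroup_le_psiGroup : psiIdSubgroup k N ≤ psiGroup k N :=
  inf_le_left

theorem psiDiffSubgroup_le_psiGroup : psiDiffSubgroup k N ≤ psiGroup k N :=
  inf_le_left

theorem mem_psiGroup {ψ : Rkn k N ≃ₐ[ℂ] Rkn k N} : ψ ∈ psiGroup k N ↔ IsPsi ψ := Iff.rfl

theorem mem_psiIdSubgroup {ψ : Rkn k N ≃ₐ[ℂ] Rkn k N} : ψ ∈ psiIdSubgroup k N ↔ IsPsiId ψ := by
  simp [psiIdSubgroup, mem_fixingSubgroup_iff, AlgEquiv.smul_def, isPsiId_iff, mem_psiGroup]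

theorem mem_psiDiffSubgroup {ψ : Rkn k N ≃ₐ[ℂ] Rkn k N} :
    ψ ∈ psiDiffSubgroup k N ↔ IsPsiDiff ψ := by
  simp [psiDiffSubgroup, mem_fixingSubgroup_iff, AlgEquiv.smul_def, isPsiDiff_iff, mem_psiGroup]

theorem IsPsiId.apply_of_onlyLambda {ν : Rkn k N ≃ₐ[ℂ] Rkn k N} (hν : IsPsiId ν) {p : Rkn k N}
    (hp : OnlyLambda p) : ν p = p := by
  obtain ⟨w, -, he⟩ := hν
  have ha := constantCoeff_subMap isDkTuple_X.constantCoeff_eq_zero w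
  rw [he, mvSubst_eq_subst ha]
  exact subst_eq_self_of_onlyLambda ha (fun _ => rfl) hp

theorem conj_mem_psiIdSubgroup {ψ ν : Rkn k N ≃ₐ[ℂ] Rkn k N} (hψ : ψ ∈ psiGroup k N)
    (hν : ν ∈ psiIdSubgroup k N) : ψ * ν * ψ⁻¹ ∈ psiIdSubgroup k N := by
  rw [mem_psiIdSubgroup, isPsiId_iff] at *
  refine ⟨(hψ.mul hν.1).mul hψ.inv, fun i => ?_⟩
  have hψi : OnlyLambda (ψ⁻¹ (X (.inl i))) := ((isPsi_iff.1 hψ.inv).2.1 i).1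
  rw [AlgEquiv.mul_apply, AlgEquiv.mul_apply, (isPsiId_iff.2 hν).apply_of_onlyLambda hψi,
    AlgEquiv.aut_inv, ψ.apply_symm_apply]

theorem disjoint_psiIdSubgroup_psiDiffSubgroup :
    Disjoint (psiIdSubgroup k N) (psiDiffSubgroup k N) := by
  rw [Subgroup.disjoint_def]
  intro ψ hId hDiff
  obtain ⟨hψ, hfixInl⟩ := isPsiId_iff.1 (mem_psiIdSubgroup.1 hId)
  obtain ⟨-, hfixInr⟩ := isPsiDiff_iff.1 (mem_psiDiffSubgroup.1 hDiff)
  exact DFunLike.coe_injective <|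
    (isPsi_iff.1 hψ).1.ext isSubstMap_id fun | .inl i => hfixInl i | .inr j => hfixInr j

variable (k N) in
noncomputable def lambdaUnits : Subgroup (Rkn k N)ˣ where
  carrier := {u | constantCoeff (u : Rkn k N) = 1 ∧ OnlyLambda (u : Rkn k N)}
  one_mem' := ⟨map_one _, onlyLambda_one⟩
  mul_mem' := fun ⟨hu, hu'⟩ ⟨hv, hv'⟩ => ⟨by simp [hu, hv], hu'.mul hv'⟩
  inv_mem' := fun {u} ⟨hu, hu'⟩ => ⟨by simp [hu], hu'.of_mul_eq_one u.mul_inv⟩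

noncomputable def IsWTuple.units {w : Fin N → Rkn k N} (hw : IsWTuple w) (j : Fin N) :
    lambdaUnits k N :=
  ⟨(isUnit_iff_constantCoeff.2 (by rw [(hw j).2]; exact isUnit_one)).unit, (hw j).2, (hw j).1⟩

theorem subst_subMap_subMap {v v' : Fin N → Rkn k N} (hv' : ∀ j, OnlyLambda (v' j))
    (h : ∀ j, v j * v' j = 1) (s : Fin k ⊕ Fin N) :
    subst (subMap (fun i => X (.inl i)) v) (subMap (fun i => X (.inl i)) v' s) = X s := by
  have ha := constantCoeff_subMap isDkTuple_X.constantCoeff_eq_zero v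
  have hsubst := hasSubst_of_constantCoeff_zero ha
  rcases s with i | j
  · exact subst_X hsubst _
  · rw [subMap_inr, subst_mul hsubst, subst_eq_self_of_onlyLambda ha (fun _ => rfl) (hv' j),
      subst_X hsubst, subMap_inr, ← mul_assoc, mul_comm (v' j), h j, one_mul]

/-- `Ψ_{id,w}`. -/
noncomputable def psiId (w : Fin N → lambdaUnits k N) : Rkn k N ≃ₐ[ℂ] Rkn k N :=
  substAlgEquiv
    (constantCoeff_subMap isDkTuple_X.constantCoeff_eq_zero fun j => (w j : (Rkn k N)ˣ))
    (constantCoeff_subMap isDkTuple_X.constantCoeff_eq_zero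
      fun j => ((w j : (Rkn k N)ˣ)⁻¹ : (Rkn k N)ˣ))
    (subst_subMap_subMap (fun j => (w j)⁻¹.2.2) fun _ => Units.mul_inv _)
    (subst_subMap_subMap (fun j => (w j).2.2) fun _ => Units.inv_mul _)

theorem coe_psiId (w : Fin N → lambdaUnits k N) :
    ⇑(psiId w) = subst (subMap (fun i => X (.inl i)) fun j => ((w j : (Rkn k N)ˣ) : Rkn k N)) :=
  coe_substAlgEquiv ..

theorem psiId_apply (w : Fin N → lambdaUnits k N) (g : Rkn k N) :
    psiId w g =
      mvSubst (subMap (fun i => X (.inl i)) fun j => ((w j : (Rkn k N)ˣ) : Rkn k N)) g := by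
  rw [mvSubst_eq_subst (constantCoeff_subMap isDkTuple_X.constantCoeff_eq_zero _), coe_psiId]

theorem isPsiId_psiId (w : Fin N → lambdaUnits k N) : IsPsiId (psiId w) :=
  ⟨_, fun j => ⟨(w j).2.2, (w j).2.1⟩, psiId_apply w⟩

theorem psiId_X_inr (w : Fin N → lambdaUnits k N) (j : Fin N) :
    psiId w (X (.inr j)) = ((w j : (Rkn k N)ˣ) : Rkn k N) * X (.inr j) := by
  rw [coe_psiId, subst_X (hasSubst_of_constantCoeff_zero
    (constantCoeff_subMap isDkTuple_X.constantCoeff_eq_zero _)), subMap_inr]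

theorem psiId_mul (w w' : Fin N → lambdaUnits k N) : psiId (w * w') = psiId w * psiId w' := by
  have hId (w : Fin N → lambdaUnits k N) := isPsiId_iff.1 (isPsiId_psiId w)
  have hsubst (w : Fin N → lambdaUnits k N) := (isPsi_iff.1 (hId w).1).1
  refine DFunLike.coe_injective <| (hsubst _).ext ((hsubst w).comp (hsubst w')) ?_
  rintro (i | j)
  · simp [(hId _).2]
  · rw [AlgEquiv.mul_apply, psiId_X_inr, psiId_X_inr, map_mul,
      (isPsiId_psiId w).apply_of_onlyLambda (w' j).2.2, psiId_X_inr, Pi.mul_apply,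
      Subgroup.coe_mul, Units.val_mul]
    ring

variable (k N) in
noncomputable def psiIdHom : (Fin N → lambdaUnits k N) →* (Rkn k N ≃ₐ[ℂ] Rkn k N) :=
  MonoidHom.mk' psiId psiId_mul

variable (k N) in
noncomputable def psiIdEquiv : (Fin N → lambdaUnits k N) ≃* psiIdSubgroup k N :=
  MulEquiv.ofBijective
    ((psiIdHom k N).codRestrict (psiIdSubgroup k N) fun w => mem_psiIdSubgroup.2 (isPsiId_psiId w))
    ⟨(injective_iff_map_eq_one _).2 fun w hw => funext fun j => by
      have hX := psiId_X_inr w j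
      rw [show psiId w = 1 from congrArg Subtype.val hw, AlgEquiv.one_apply] at hX
      exact Subtype.ext <| Units.ext <| mul_right_cancel₀
        (nonZeroDivisors.ne_zero X_mem_nonzeroDivisors) (hX.symm.trans (one_mul _).symm),
    fun ⟨ν, hν⟩ => by
      obtain ⟨w, hw, he⟩ := mem_psiIdSubgroup.1 hν
      exact ⟨hw.units, Subtype.ext <| AlgEquiv.ext fun g => (psiId_apply _ g).trans (he g).symm⟩⟩

/-- `Ψ_{f,w} = Ψ_{id,w} ∘ Ψ_{f,1}`. -/
theorem exists_psiId_mul_psiDiff {ψ : Rkn k N ≃ₐ[ℂ] Rkn k N} (hψ : ψ ∈ psiGroup k N) :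
    ∃ ν ∈ psiIdSubgroup k N, ∃ δ ∈ psiDiffSubgroup k N, ν * δ = ψ := by
  obtain ⟨-, -, w, hw, hX⟩ := isPsi_iff.1 hψ
  set ν := psiId hw.units
  have hν : ν ∈ psiIdSubgroup k N := mem_psiIdSubgroup.2 (isPsiId_psiId _)
  refine ⟨ν, hν, ν⁻¹ * ψ, mem_psiDiffSubgroup.2 (isPsiDiff_iff.2 ⟨?_, fun j => ?_⟩),
    mul_inv_cancel_left ν ψ⟩
  · exact (psiGroup k N).mul_mem ((psiGroup k N).inv_mem (psiIdSubgroup_le_psiGroup hν)) hψ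
  · have hνX : ν (X (.inr j)) = w j * X (.inr j) := psiId_X_inr _ j
    rw [AlgEquiv.mul_apply, hX j, ← hνX, AlgEquiv.aut_inv, AlgEquiv.symm_apply_apply]

theorem isInternalSemidirect_psiGroup :
    (psiGroup k N).IsInternalSemidirect (psiIdSubgroup k N) (psiDiffSubgroup k N) where
  le_left := psiIdSubgroup_le_psiGroup
  le_right := psiDiffSubgroup_le_psiGroup
  conj_mem _ hψ _ hν := conj_mem_psiIdSubgroup hψ hν
  disjoint := disjoint_psiIdSubgroup_psiDiffSubgroup
  exists_mul_eq _ hψ := exists_psiId_mul_psiDiff hψ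

theorem psiGroup_proj_apply (ψ : psiGroup k N) {f : Fin k → Rkn k N} {w : Fin N → Rkn k N}
    (hf : IsDkTuple f) (he : ∀ g, (ψ : Rkn k N ≃ₐ[ℂ] Rkn k N) g = mvSubst (subMap f w) g)
    (g : Rkn k N) :
    (isInternalSemidirect_psiGroup.proj ψ : Rkn k N ≃ₐ[ℂ] Rkn k N) g =
      mvSubst (subMap f fun _ => 1) g := by
  set δ := isInternalSemidirect_psiGroup.proj ψ
  obtain ⟨-, hfix⟩ := isPsiId_iff.1 <| mem_psiIdSubgroup.1 <|
    isInternalSemidirect_psiGroup.proj_eq_iff.1 (rfl : δ = δ)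
  obtain ⟨hδ, hδX⟩ := isPsiDiff_iff.1 (mem_psiDiffSubgroup.1 δ.2)
  have hψX := (hf.forall_eq_mvSubst_iff w).1 he |>.2
  refine (hf.forall_eq_mvSubst_iff _).2
    ⟨(isPsi_iff.1 hδ).1, ?_⟩ g
  rintro (i | j)
  · have hψi : ψ.1 (X (.inl i)) = f i := hψX (.inl i)
    rw [subMap, Sum.elim_inl, ← hψi]
    have := hfix i
    rw [AlgEquiv.mul_apply, AlgEquiv.aut_inv, AlgEquiv.symm_apply_eq] at this
    exact this.symm
  · exact (hδX j).trans (one_mul _).symm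

end Renormalization

theorem renormalization_group_semidirect_product_general (k N : ℕ) :
    ∃ G N₀ D : Subgroup (Rkn k N ≃ₐ[ℂ] Rkn k N),
      (G : Set (Rkn k N ≃ₐ[ℂ] Rkn k N)) = {ψ | IsPsi ψ} ∧
      (N₀ : Set (Rkn k N ≃ₐ[ℂ] Rkn k N)) = {ψ | IsPsiId ψ} ∧
      (D : Set (Rkn k N ≃ₐ[ℂ] Rkn k N)) = {ψ | IsPsiDiff ψ} ∧
      N₀ ≤ G ∧ D ≤ G ∧
      -- (1) `N₀` is normal in `G` …
      (∀ ψ ∈ G, ∀ ν ∈ N₀, ψ * ν * ψ⁻¹ ∈ N₀) ∧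
      -- … and `w ↦ Ψ_{id,w}` is an isomorphism from the direct product of `N` copies of
      -- the multiplicative group of `λ`-series with constant coefficient `1` onto `N₀`:
      (∃ U : Subgroup (Rkn k N)ˣ,
        (U : Set (Rkn k N)ˣ) =
          {u : (Rkn k N)ˣ |
            MvPowerSeries.constantCoeff (u : Rkn k N) = 1 ∧ OnlyLambda (u : Rkn k N)} ∧
        ∃ Θ : (Fin N → U) ≃* N₀,
          ∀ (w : Fin N → U) (g : Rkn k N),
            ((Θ w : Rkn k N ≃ₐ[ℂ] Rkn k N)) g =
              mvSubst (subMap (fun i => MvPowerSeries.X (Sum.inl i))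
                (fun j => ((w j : (Rkn k N)ˣ) : Rkn k N))) g) ∧
      -- (2) `Ψ_{f,w} ↦ Ψ_{f,1}` is a split surjective homomorphism `G → D` with kernel
      -- `N₀`:
      (∃ π : G →* D,
        Function.Surjective π ∧
        (∀ (ψ : G) (f : Fin k → Rkn k N) (w : Fin N → Rkn k N),
          IsDkTuple f → IsWTuple w →
          (∀ g : Rkn k N, (ψ : Rkn k N ≃ₐ[ℂ] Rkn k N) g = mvSubst (subMap f w) g) →
          ∀ g : Rkn k N, ((π ψ : Rkn k N ≃ₐ[ℂ] Rkn k N)) g =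
            mvSubst (subMap f fun _ => (1 : Rkn k N)) g) ∧
        (∀ ψ : G, π ψ = 1 ↔ (ψ : Rkn k N ≃ₐ[ℂ] Rkn k N) ∈ N₀) ∧
        (∃ s : D →* G,
          (∀ δ : D, ((s δ : G) : Rkn k N ≃ₐ[ℂ] Rkn k N) = (δ : Rkn k N ≃ₐ[ℂ] Rkn k N)) ∧
          ∀ δ : D, π (s δ) = δ)) ∧
      -- consequently `G` is a semidirect product `N₀ ⋊ D`:
      (∃ φ : D →* MulAut N₀, Nonempty (G ≃* SemidirectProduct N₀ D φ)) := by
  have hS := isInternalSemidirect_psiGroup (k := k) (N := N)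
  exact ⟨psiGroup k N, psiIdSubgroup k N, psiDiffSubgroup k N, rfl,
    Set.ext fun _ => mem_psiIdSubgroup, Set.ext fun _ => mem_psiDiffSubgroup,
    hS.le_left, hS.le_right, hS.conj_mem,
    ⟨lambdaUnits k N, rfl, psiIdEquiv k N, psiId_apply⟩,
    ⟨hS.proj, hS.proj_surjective, fun ψ _ _ hf _ he => psiGroup_proj_apply ψ hf he,
      hS.proj_eq_one_iff, ⟨Subgroup.inclusion hS.le_right, fun _ => rfl, hS.proj_inclusion⟩⟩,
    _, ⟨hS.splitting.semidirectProductMulEquiv.symm⟩⟩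

/-- The group `G = {Ψ_{f,w}}` of substitution automorphisms of
`R = ℂ[[λ₁,…,λ_k,φ₁,…,φ_N]]` is the semidirect product of the normal subgroup
`N₀ = {Ψ_{id,w}}` — isomorphic to the direct product of `N` copies of the multiplicative
group of `λ`-power series with constant coefficient `1` (a subgroup of `R^×`) — by the
subgroup `{Ψ_{f,1}}` of formal diffeomorphisms of the coupling constants (representing
`D_kᵒᵖ` via the splitting `f ↦ Ψ_{f,1}`): the projection `Ψ_{f,w} ↦ Ψ_{f,1}` is a split
surjective homomorphism with kernel `N₀`, whence `G ≅ N₀ ⋊ D_kᵒᵖ`. -/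
theorem renormalization_group_semidirect_product (k N : ℕ) (hk : 1 ≤ k) (hN : 1 ≤ N) :
    ∃ G N₀ D : Subgroup (Rkn k N ≃ₐ[ℂ] Rkn k N),
      (G : Set (Rkn k N ≃ₐ[ℂ] Rkn k N)) = {ψ | IsPsi ψ} ∧
      (N₀ : Set (Rkn k N ≃ₐ[ℂ] Rkn k N)) = {ψ | IsPsiId ψ} ∧
      (D : Set (Rkn k N ≃ₐ[ℂ] Rkn k N)) = {ψ | IsPsiDiff ψ} ∧
      N₀ ≤ G ∧ D ≤ G ∧
      -- (1) `N₀` is normal in `G` …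
      (∀ ψ ∈ G, ∀ ν ∈ N₀, ψ * ν * ψ⁻¹ ∈ N₀) ∧
      -- … and `w ↦ Ψ_{id,w}` is an isomorphism from the direct product of `N` copies of
      -- the multiplicative group of `λ`-series with constant coefficient `1` onto `N₀`:
      (∃ U : Subgroup (Rkn k N)ˣ,
        (U : Set (Rkn k N)ˣ) =
          {u : (Rkn k N)ˣ |
            MvPowerSeries.constantCoeff (u : Rkn k N) = 1 ∧ OnlyLambda (u : Rkn k N)} ∧
        ∃ Θ : (Fin N → U) ≃* N₀,
          ∀ (w : Fin N → U) (g : Rkn k N),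
            ((Θ w : Rkn k N ≃ₐ[ℂ] Rkn k N)) g =
              mvSubst (subMap (fun i => MvPowerSeries.X (Sum.inl i))
                (fun j => ((w j : (Rkn k N)ˣ) : Rkn k N))) g) ∧
      -- (2) `Ψ_{f,w} ↦ Ψ_{f,1}` is a split surjective homomorphism `G → D` with kernel
      -- `N₀`:
      (∃ π : G →* D,
        Function.Surjective π ∧
        (∀ (ψ : G) (f : Fin k → Rkn k N) (w : Fin N → Rkn k N),
          IsDkTuple f → IsWTuple w →
          (∀ g : Rkn k N, (ψ : Rkn k N ≃ₐ[ℂ] Rkn k N) g = mvSubst (subMap f w) g) →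
          ∀ g : Rkn k N, ((π ψ : Rkn k N ≃ₐ[ℂ] Rkn k N)) g =
            mvSubst (subMap f fun _ => (1 : Rkn k N)) g) ∧
        (∀ ψ : G, π ψ = 1 ↔ (ψ : Rkn k N ≃ₐ[ℂ] Rkn k N) ∈ N₀) ∧
        (∃ s : D →* G,
          (∀ δ : D, ((s δ : G) : Rkn k N ≃ₐ[ℂ] Rkn k N) = (δ : Rkn k N ≃ₐ[ℂ] Rkn k N)) ∧
          ∀ δ : D, π (s δ) = δ)) ∧
      -- consequently `G` is a semidirect product `N₀ ⋊ D`: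
      (∃ φ : D →* MulAut N₀, Nonempty (G ≃* SemidirectProduct N₀ D φ)) :=
  renormalization_group_semidirect_product_general k N
end
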